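/- arXiv:2312.13702 — 10 statements merged into one kernel-verified Lean document; each statement's English description precedes it below -/
import Mathlib

section
/- Let G be the complete k-partite graph with parts V_1,...,V_k each of size max(k,3). Let u_i, v_i ∈ V_i and u_j, v_j ∈ V_j with i ≠ j be four distinct vertices. Then the graph G' obtained from G by removing the edges (u_i,u_j) and (v_i,v_j) and adding the edges (u_i,v_i) and (u_j,v_j) is not k-colorable. -/
/-- The complete `k`-partite graph with parts `V_1, …, V_k` each of size `max k 3`:
vertices are pairs (part index, position in part), adjacent iff they lie in different parts. -/
def completeKPartite (k : ℕ) : SimpleGraph (Fin k × Fin (max k 3)) where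
  Adj x y := x.1 ≠ y.1
  symm := ⟨fun _ _ h => Ne.symm h⟩
  loopless := ⟨fun _ h => h rfl⟩

/-- Removing the edges `(u_i, u_j)` and `(v_i, v_j)` from the complete `k`-partite graph
(with `u_i = (i,a)`, `v_i = (i,b)` in part `i` and `u_j = (j,c)`, `v_j = (j,d)` in part `j`,
`i ≠ j`) and adding the edges `(u_i, v_i)` and `(u_j, v_j)` yields a graph that is not
`k`-colorable. -/
theorem stmt_0 (k : ℕ) (i j : Fin k) (hij : i ≠ j)
    (a b c d : Fin (max k 3)) (hab : a ≠ b) (hcd : c ≠ d) :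
    ¬ (SimpleGraph.fromEdgeSet
        (((completeKPartite k).edgeSet \ {s((i, a), (j, c)), s((i, b), (j, d))}) ∪
          {s((i, a), (i, b)), s((j, c), (j, d))})).Colorable k := by
  intro h
  have hclique := h.cliqueFree (Nat.lt_succ_self k)
  -- find x ≠ c, d in Fin (max k 3)
  obtain ⟨x, hxc, hxd⟩ : ∃ x : Fin (max k 3), x ≠ c ∧ x ≠ d := by
    have h3 : 3 ≤ Fintype.card (Fin (max k 3)) := by simp
    have h2 : ({c, d} : Finset (Fin (max k 3))).card ≤ 2 :=
      (Finset.card_insert_le _ _).trans (by simp)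
    have hne : (({c, d} : Finset (Fin (max k 3)))ᶜ).Nonempty := by
      rw [← Finset.card_pos, Finset.card_compl]
      omega
    obtain ⟨y, hy⟩ := hne
    simp only [Finset.mem_compl, Finset.mem_insert, Finset.mem_singleton, not_or] at hy
    exact ⟨y, hy.1, hy.2⟩
  have hk : 0 < k := i.pos
  set S : Finset (Fin k × Fin (max k 3)) :=
    insert (j, x) (insert (i, b) ((Finset.univ.erase j).image (fun l => (l, a)))) with hS
  refine hclique S ⟨?_, ?_⟩
  · rw [SimpleGraph.isClique_iff]
    intro u hu v hv huv
    simp only [hS, Finset.coe_insert, Set.mem_insert_iff, Finset.coe_image,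
      Finset.coe_erase, Set.mem_image, Finset.mem_coe, Finset.mem_erase,
      Finset.mem_univ, and_true, Set.mem_diff, Set.mem_singleton_iff] at hu hv
    rw [SimpleGraph.fromEdgeSet_adj]
    refine ⟨?_, huv⟩
    simp only [Set.mem_union, Set.mem_diff, SimpleGraph.mem_edgeSet,
      Set.mem_insert_iff, Set.mem_singleton_iff, completeKPartite]
    rcases hu with rfl | rfl | ⟨l, hl, rfl⟩ <;>
      rcases hv with rfl | rfl | ⟨m, hm, rfl⟩ <;>
      simp_all [Sym2.eq_iff, Prod.ext_iff, completeKPartite, hij, hij.symm,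
        hab, hab.symm, hcd, hcd.symm, hxc, hxd] <;> tauto
  · have hinj : Function.Injective (fun l : Fin k => ((l, a) : Fin k × Fin (max k 3))) := by
      intro p q hpq
      simpa [Prod.ext_iff] using hpq
    have h1 : ((i : Fin k), b) ∉ (Finset.univ.erase j).image (fun l => (l, a)) := by
      simp only [Finset.mem_image, Finset.mem_erase, Finset.mem_univ, and_true,
        Prod.ext_iff, not_exists, not_and]
      intro l _ _
      exact hab
    have h2 : ((j : Fin k), x) ∉
        insert ((i : Fin k), b) ((Finset.univ.erase j).image (fun l => (l, a))) := by
      simp only [Finset.mem_insert, Finset.mem_image, Finset.mem_erase, Finset.mem_univ,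
        and_true, Prod.ext_iff, not_or, not_exists, not_and]
      exact ⟨fun hji _ => hij hji.symm, fun l hl hlj => absurd hlj hl⟩
    rw [hS, Finset.card_insert_of_notMem h2, Finset.card_insert_of_notMem h1,
      Finset.card_image_of_injective _ hinj, Finset.card_erase_of_mem (Finset.mem_univ j),
      Finset.card_univ, Fintype.card_fin]
    omega
end

section
/- Let r ≥ 2 and let K and K' be two disjoint cliques each on vertex set {1,...,r}, connected by an antimatching: vertex i of K is adjacent to vertex j of K' if and only if i ≠ j. In any proper r-coloring of this graph, for every i, vertex i of K receives the same color as vertex i of K'. -/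
/-- Two disjoint cliques, each on vertex set `Fin r` (indexed by a boolean telling which
clique we are in), joined by an antimatching: vertex `i` of one clique is adjacent to
vertex `j` of the other iff `i ≠ j`.  Within each clique all pairs of distinct vertices
are adjacent.  Altogether, two vertices are adjacent iff their `Fin r` indices differ. -/
def twoCliquesAntimatching (r : ℕ) : SimpleGraph (Bool × Fin r) where
  Adj x y := x.2 ≠ y.2
  symm := ⟨fun _ _ h => Ne.symm h⟩
  loopless := ⟨fun _ h => h rfl⟩

/-- For `r ≥ 2`, in any proper `r`-coloring of two cliques on `{1,…,r}` joined by an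
antimatching, vertex `i` of the first clique gets the same color as vertex `i` of the
second clique. -/
theorem stmt_2 (r : ℕ) (hr : 2 ≤ r)
    (C : (twoCliquesAntimatching r).Coloring (Fin r)) (i : Fin r) :
    C (false, i) = C (true, i) := by
  have hinj : Function.Injective (fun j : Fin r => C (false, j)) := by
    intro a b hab
    by_contra hne
    exact C.valid (show (twoCliquesAntimatching r).Adj (false, a) (false, b) from hne) hab
  have hsurj := Finite.surjective_of_injective hinj
  obtain ⟨j, hj⟩ := hsurj (C (true, i))
  by_cases hji : j = i
  · subst hji; simpa using hj
  · exact absurd hj (C.valid (show (twoCliquesAntimatching r).Adj (false, j) (true, i) from hji))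
end

section
/- For permutations σ, τ of {1,...,r}, the graph G_{r,s}(σ,τ) (two copies of the graph P_{r,s}, joined at both ends by antimatchings given by σ and τ respectively) is r-colorable if and only if σ = τ. -/
/-!
In an `r`-colouring every clique `K_p` uses each colour exactly once. A vertex adjacent to all
but one vertex of a fully coloured clique must repeat the colour of the missing one, so the
colour of `(i, p)` does not depend on `p`, and the two antimatchings force
`c (i, 1) = c' (σ i, 1)` and `c (i, s) = c' (τ i, s)`; hence `c' (σ i, 1) = c' (τ i, 1)`
and `σ = τ`. Conversely, colouring the first copy by `i` and the second by `σ⁻¹ j` works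
when `σ = τ`.
-/

/-- The graph `G_{r,s}(σ,τ)`: two copies (indexed by a `Bool`) of the graph `P_{r,s}`
on vertex set `Fin r × Fin s` (a sequence of `s` cliques of size `r`, consecutive cliques
joined by an antimatching: `(i,p)` is adjacent to `(j,q)` iff `i ≠ j` and `|p - q| ≤ 1`),
together with an antimatching between the two first cliques given by `σ`
(`(i,0)` of the first copy is adjacent to `(j,0)` of the second copy iff `j ≠ σ i`)
and an antimatching between the two last cliques given by `τ`
(`(i,s-1)` of the first copy is adjacent to `(j,s-1)` of the second copy iff `j ≠ τ i`). -/
def Grst (r s : ℕ) (σ τ : Equiv.Perm (Fin r)) : SimpleGraph (Bool × Fin r × Fin s) :=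
  SimpleGraph.fromRel (fun x y =>
    (x.1 = y.1 ∧ x.2.1 ≠ y.2.1 ∧
      (x.2.2 = y.2.2 ∨ (x.2.2 : ℕ) + 1 = (y.2.2 : ℕ)))
    ∨ (x.1 = false ∧ y.1 = true ∧ x.2.2 = y.2.2 ∧
      (((x.2.2 : ℕ) = 0 ∧ y.2.1 ≠ σ x.2.1) ∨ ((x.2.2 : ℕ) = s - 1 ∧ y.2.1 ≠ τ x.2.1))))

namespace SimpleGraph.Coloring

variable {V α ι : Type*} {G : SimpleGraph V}

theorem eq_of_adj_of_forall_ne (C : G.Coloring α) {g : ι → V}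
    (hg : Function.Surjective (C ∘ g)) {v : V} {j₀ : ι}
    (hadj : ∀ j, j ≠ j₀ → G.Adj v (g j)) : C v = C (g j₀) := by
  obtain ⟨j, hj⟩ := hg (C v)
  rcases eq_or_ne j j₀ with rfl | hne
  · exact hj.symm
  · exact absurd hj.symm (C.valid (hadj j hne))

end SimpleGraph.Coloring

namespace Grst

variable {r s : ℕ} {σ τ : Equiv.Perm (Fin r)}

theorem adj_of_ne_of_consecutive (b : Bool) {i j : Fin r} {p q : Fin s} (hij : i ≠ j)
    (hpq : p = q ∨ (p : ℕ) + 1 = q) : (Grst r s σ τ).Adj (b, i, p) (b, j, q) :=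
  (SimpleGraph.fromRel_adj _ _ _).mpr
    ⟨fun h => hij (congrArg (·.2.1) h), Or.inl (Or.inl ⟨rfl, hij, hpq⟩)⟩

theorem adj_first {i j : Fin r} {p : Fin s} (hp : (p : ℕ) = 0) (hj : j ≠ σ i) :
    (Grst r s σ τ).Adj (false, i, p) (true, j, p) :=
  (SimpleGraph.fromRel_adj _ _ _).mpr
    ⟨by simp, Or.inl (Or.inr ⟨rfl, rfl, rfl, Or.inl ⟨hp, hj⟩⟩)⟩

theorem adj_last {i j : Fin r} {p : Fin s} (hp : (p : ℕ) = s - 1) (hj : j ≠ τ i) :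
    (Grst r s σ τ).Adj (false, i, p) (true, j, p) :=
  (SimpleGraph.fromRel_adj _ _ _).mpr
    ⟨by simp, Or.inl (Or.inr ⟨rfl, rfl, rfl, Or.inr ⟨hp, hj⟩⟩)⟩

section Coloring

variable (C : (Grst r s σ τ).Coloring (Fin r))

theorem injective_color_layer (b : Bool) (p : Fin s) :
    Function.Injective fun i => C (b, i, p) :=
  C.injective_comp_of_pairwise_adj (fun i => (b, i, p))
    fun _ _ hij => adj_of_ne_of_consecutive b hij (Or.inl rfl)

theorem surjective_color_layer (b : Bool) (p : Fin s) :
    Function.Surjective fun i => C (b, i, p) :=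
  Finite.surjective_of_injective (injective_color_layer C b p)

theorem color_eq_of_succ (b : Bool) (i : Fin r) {p q : Fin s} (hpq : (p : ℕ) + 1 = q) :
    C (b, i, q) = C (b, i, p) :=
  C.eq_of_adj_of_forall_ne (surjective_color_layer C b p)
    fun _ hj => (adj_of_ne_of_consecutive b hj (Or.inr hpq)).symm

theorem color_eq_along_row (b : Bool) (i : Fin r) (p q : Fin s) :
    C (b, i, p) = C (b, i, q) := by
  suffices h : ∀ (k : ℕ) (hk : k < s), C (b, i, ⟨k, hk⟩) = C (b, i, ⟨0, by omega⟩) from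
    (h p p.isLt).trans (h q q.isLt).symm
  intro k
  induction k with
  | zero => exact fun _ => rfl
  | succ k ih => exact fun hk => (color_eq_of_succ C b i rfl).trans (ih (by omega))

theorem color_eq_first {p : Fin s} (hp : (p : ℕ) = 0) (i : Fin r) :
    C (false, i, p) = C (true, σ i, p) :=
  C.eq_of_adj_of_forall_ne (surjective_color_layer C true p) fun _ hj => adj_first hp hj

theorem color_eq_last {p : Fin s} (hp : (p : ℕ) = s - 1) (i : Fin r) :
    C (false, i, p) = C (true, τ i, p) :=
  C.eq_of_adj_of_forall_ne (surjective_color_layer C true p) fun _ hj => adj_last hp hj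

end Coloring

theorem eq_of_colorable (hs : 0 < s) (h : (Grst r s σ τ).Colorable r) : σ = τ := by
  obtain ⟨C⟩ := h
  let first : Fin s := ⟨0, hs⟩
  let last : Fin s := ⟨s - 1, by omega⟩
  refine Equiv.ext fun i => injective_color_layer C true first ?_
  calc C (true, σ i, first) = C (false, i, first) := (color_eq_first C rfl i).symm
    _ = C (false, i, last) := color_eq_along_row C false i first last
    _ = C (true, τ i, last) := color_eq_last C rfl i
    _ = C (true, τ i, first) := color_eq_along_row C true (τ i) last first

def canonicalColoring (r s : ℕ) (σ : Equiv.Perm (Fin r)) : (Grst r s σ σ).Coloring (Fin r) :=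
  SimpleGraph.Coloring.mk (fun x => if x.1 then σ⁻¹ x.2.1 else x.2.1) <| by
    rintro ⟨b, i, p⟩ ⟨b', j, q⟩
      ⟨-, (⟨rfl, hij, -⟩ | ⟨rfl, rfl, -, h⟩) | (⟨rfl, hij, -⟩ | ⟨rfl, rfl, -, h⟩)⟩
    · cases b <;> simpa using hij
    · have hj : j ≠ σ i := h.elim (·.2) (·.2)
      simpa [Equiv.Perm.inv_def, Equiv.eq_symm_apply, eq_comm] using hj
    · cases b' <;> simpa [eq_comm] using hij
    · have hi : i ≠ σ j := h.elim (·.2) (·.2)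
      simpa [Equiv.Perm.inv_def, Equiv.symm_apply_eq] using hi

end Grst

theorem stmt_3_general (r s : ℕ) (hs : 2 ≤ s) (σ τ : Equiv.Perm (Fin r)) :
    (Grst r s σ τ).Colorable r ↔ σ = τ :=
  ⟨Grst.eq_of_colorable (by omega), by rintro rfl; exact ⟨Grst.canonicalColoring r s σ⟩⟩

/-- For `r, s ≥ 2` and permutations `σ, τ` of `{1,…,r}`, the graph `G_{r,s}(σ,τ)` is
`r`-colorable if and only if `σ = τ`. -/
theorem stmt_3 (r s : ℕ) (hr : 2 ≤ r) (hs : 2 ≤ s) (σ τ : Equiv.Perm (Fin r)) :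
    (Grst r s σ τ).Colorable r ↔ σ = τ :=
  stmt_3_general r s hs σ τ
end

section
/- Let G be a uniquely k-colorable graph (k-colorable with a unique color partition), let u be a vertex, C a color class of its coloring, and i a natural number such that some vertex of G is at distance exactly i+2 from u. Then C contains a vertex at distance i, i+1, or i+2 from u. -/
/-- If `u` is reachable and at distance `n+1` from `z`, there is a neighbor `y` of `z`
at distance `n` from `u`. -/
lemma stmt_5_aux_step {V : Type} (G : SimpleGraph V) (u z : V) (n : ℕ)
    (hr : G.Reachable u z) (hd : G.dist u z = n + 1) :
    ∃ y, G.Adj y z ∧ G.Reachable u y ∧ G.dist u y = n := by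
  obtain ⟨p, hp⟩ := hr.exists_walk_length_eq_dist
  rw [hd] at hp
  cases hq : p.reverse with
  | nil =>
    have : p.reverse.length = n + 1 := by rw [SimpleGraph.Walk.length_reverse, hp]
    rw [hq] at this
    simp at this
  | @cons _ y _ h q' =>
    have hlen : q'.length = n := by
      have : p.reverse.length = n + 1 := by rw [SimpleGraph.Walk.length_reverse, hp]
      rw [hq] at this
      simpa using this
    refine ⟨y, h.symm, q'.reverse.reachable, le_antisymm ?_ ?_⟩
    · calc G.dist u y ≤ q'.reverse.length := G.dist_le _
        _ = n := by rw [SimpleGraph.Walk.length_reverse, hlen]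
    · -- dist u z ≤ dist u y + 1
      obtain ⟨w, hw⟩ := (q'.reverse.reachable).exists_walk_length_eq_dist
      have h2 : G.dist u z ≤ (w.append (SimpleGraph.Walk.cons h.symm SimpleGraph.Walk.nil)).length :=
        G.dist_le _
      rw [SimpleGraph.Walk.length_append, hw] at h2
      simp only [SimpleGraph.Walk.length_cons, SimpleGraph.Walk.length_nil] at h2
      omega

/-- In a uniquely colorable graph, every vertex has a neighbor of each color other
than its own (given that the color class is nonempty). -/
lemma stmt_5_aux_nbr {V : Type} (G : SimpleGraph V) (k : ℕ)
    (φ : G.Coloring (Fin k))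
    (huniq : ∀ ψ : G.Coloring (Fin k), ∀ u v : V, ψ u = ψ v ↔ φ u = φ v)
    (α : Fin k) (hα : ∃ w, φ w = α) (y : V) (hy : φ y ≠ α) :
    ∃ w, G.Adj y w ∧ φ w = α := by
  classical
  by_contra hno
  push_neg at hno
  set f : V → Fin k := fun v => if v = y then α else φ v with hf
  have hvalid : ∀ {a b : V}, G.Adj a b → f a ≠ f b := by
    intro a b hab
    simp only [hf]
    split_ifs with ha hb hb
    · subst ha; subst hb; exact absurd hab (G.loopless.irrefl b)
    · subst ha
      exact fun hc => hno b hab hc.symm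
    · subst hb
      exact fun hc => hno a hab.symm hc
    · exact φ.valid hab
  let ψ : G.Coloring (Fin k) := SimpleGraph.Coloring.mk f hvalid
  obtain ⟨w0, hw0⟩ := hα
  have hwy : w0 ≠ y := fun hc => hy (hc ▸ hw0)
  have h1 : ψ y = ψ w0 := by
    show f y = f w0
    simp [hf, hwy, hw0]
  have h2 := (huniq ψ y w0).mp h1
  rw [hw0] at h2
  exact hy h2

/-- Let `G` be a `k`-colorable graph (witnessed by the proper coloring `φ`) which is
uniquely `k`-colorable: every proper `k`-coloring induces the same partition into color
classes as `φ`.  Let `u` be a vertex, `α` a color whose class is nonempty, and `i` a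
natural number such that some vertex of `G` is at distance exactly `i + 2` from `u`.
Then the class of `α` contains a vertex at distance `i`, `i+1` or `i+2` from `u`. -/
theorem stmt_5 {V : Type} (G : SimpleGraph V) (k : ℕ)
    (φ : G.Coloring (Fin k))
    (huniq : ∀ ψ : G.Coloring (Fin k), ∀ u v : V, ψ u = ψ v ↔ φ u = φ v)
    (u : V) (α : Fin k) (hα : ∃ w, φ w = α) (i : ℕ)
    (hz : ∃ z, G.Reachable u z ∧ G.dist u z = i + 2) :
    ∃ w, G.Reachable u w ∧ φ w = α ∧
      (G.dist u w = i ∨ G.dist u w = i + 1 ∨ G.dist u w = i + 2) := by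
  obtain ⟨z, hrz, hdz⟩ := hz
  obtain ⟨y, hyz, hry, hdy⟩ := stmt_5_aux_step G u z (i + 1) hrz hdz
  by_cases hyα : φ y = α
  · exact ⟨y, hry, hyα, Or.inr (Or.inl hdy)⟩
  · obtain ⟨w, hyw, hwα⟩ := stmt_5_aux_nbr G k φ huniq α hα y hyα
    have hrw : G.Reachable u w := hry.trans hyw.reachable
    -- dist u w ≤ dist u y + 1
    obtain ⟨p, hp⟩ := hry.exists_walk_length_eq_dist
    have hub : G.dist u w ≤ i + 2 := by
      have := G.dist_le (p.append (SimpleGraph.Walk.cons hyw SimpleGraph.Walk.nil))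
      rw [SimpleGraph.Walk.length_append, hp, hdy] at this
      simpa using this
    -- dist u y ≤ dist u w + 1
    obtain ⟨q, hq⟩ := hrw.exists_walk_length_eq_dist
    have hlb : i ≤ G.dist u w := by
      have := G.dist_le (q.append (SimpleGraph.Walk.cons hyw.symm SimpleGraph.Walk.nil))
      rw [SimpleGraph.Walk.length_append, hq, hdy] at this
      simp only [SimpleGraph.Walk.length_cons, SimpleGraph.Walk.length_nil] at this
      omega
    exact ⟨w, hrw, hwα, by omega⟩
end

section
/- For all positive integers k and n, there exists a word of length k^n over an alphabet of size k such that every word of length n over that alphabet appears at most once as a factor (a block of consecutive letters) of it. -/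
/-!
Words of length `n = m + 1` are the vertices of the de Bruijn graph, and a permutation `σ` of
them in which `σ v` is `v` shifted left by one letter with some letter appended is a cover of
that graph by disjoint cycles (rotating `v` is one). If two words `v, v'` with the same tail lie
on different cycles, composing `σ` with the transposition of `v` and `v'` keeps the shift property
and joins the two cycles. When no such pair is left, every word reaches every `Fin.snoc (tail v) a`
and hence, appending `n` arbitrary letters, every word: `σ` is a single cycle. Reading off the
first letter of each of its `k ^ n` vertices, the length-`n` windows of the resulting word are
consecutive vertices of the cycle, hence pairwise distinct.
-/

open Equiv Function

namespace Equiv.Perm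

section Finite

variable {α : Type*} [Finite α] {σ τ : Perm α} {x y a b : α}

theorem SameCycle.of_forall_sameCycle_apply (h : ∀ z, τ.SameCycle z (σ z))
    (hab : σ.SameCycle a b) : τ.SameCycle a b := by
  obtain ⟨i, rfl⟩ := hab.exists_nat_pow_eq
  clear hab
  induction i generalizing a with
  | zero => rfl
  | succ i ih => exact (h a).trans (by simpa [pow_succ] using ih (a := σ a))

variable [DecidableEq α]

theorem sameCycle_mul_swap_of_not_sameCycle (hxy : ¬ σ.SameCycle x y) :
    (σ * swap x y).SameCycle x y := by
  -- On the `σ`-cycle of `y`, which avoids `x`, the new permutation agrees with `σ` except at `y`.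
  have hcycle : ∀ (n : ℕ) z, (σ ^ n) z = y → (σ * swap x y).SameCycle z y := by
    intro n
    induction n with
    | zero => rintro z rfl; rfl
    | succ n ih =>
      intro z hz
      by_cases hzy : z = y
      · rw [hzy]
      have hzx : z ≠ x := by rintro rfl; exact hxy ⟨((n + 1 : ℕ) : ℤ), by rwa [zpow_natCast]⟩
      rw [← sameCycle_apply_left, mul_apply, swap_apply_of_ne_of_ne hzx hzy]
      exact ih _ (by rwa [pow_succ, mul_apply] at hz)
  obtain ⟨n, hn⟩ := (sameCycle_apply_left.mpr (SameCycle.refl σ y)).exists_nat_pow_eq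
  rw [← sameCycle_apply_left, mul_apply, swap_apply_left]
  exact hcycle n _ hn

theorem SameCycle.mul_swap_of_not_sameCycle (hxy : ¬ σ.SameCycle x y) (hab : σ.SameCycle a b) :
    (σ * swap x y).SameCycle a b := by
  have hmerge := sameCycle_mul_swap_of_not_sameCycle hxy
  refine hab.of_forall_sameCycle_apply fun z => ?_
  rw [show σ z = (σ * swap x y) (swap x y z) by simp, sameCycle_apply_right]
  rcases eq_or_ne z x with rfl | hzx
  · simpa using hmerge
  rcases eq_or_ne z y with rfl | hzy
  · simpa using hmerge.symm
  · rw [swap_apply_of_ne_of_ne hzx hzy]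

end Finite

theorem injOn_pow_apply_of_forall_sameCycle {α : Type*} [Fintype α] {σ : Perm α} {x : α}
    (h : ∀ y, σ.SameCycle x y) :
    Set.InjOn (fun i : ℕ => (σ ^ i) x) (Set.Iio (Fintype.card α)) := by
  have hpos : 0 < minimalPeriod σ x :=
    IsPeriodicPt.minimalPeriod_pos (orderOf_pos σ) (by
      show (σ ^ orderOf σ) x = x
      rw [pow_orderOf_eq_one, one_apply])
  have hcard : Fintype.card α ≤ minimalPeriod σ x := by
    refine (Fintype.card_le_of_surjective (fun i : Fin (minimalPeriod σ x) => (σ ^ (i : ℕ)) x)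
      fun y => ?_).trans_eq (Fintype.card_fin _)
    obtain ⟨i, rfl⟩ := (h y).exists_nat_pow_eq
    exact ⟨⟨i % minimalPeriod σ x, Nat.mod_lt _ hpos⟩, iterate_mod_minimalPeriod_eq⟩
  exact iterate_injOn_Iio_minimalPeriod.mono fun i hi => lt_of_lt_of_le hi hcard

end Equiv.Perm

namespace DeBruijn

variable {α : Type*} {m : ℕ}

def IsSuccessorRule (σ : Perm (Fin (m + 1) → α)) : Prop :=
  ∀ v, Fin.init (σ v) = Fin.tail v

theorem isSuccessorRule_rotate :
    IsSuccessorRule ((finRotate (m + 1)).symm.arrowCongr (Equiv.refl α)) := by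
  intro v
  ext i
  simp [Fin.init, Fin.tail]

namespace IsSuccessorRule

variable {σ : Perm (Fin (m + 1) → α)}

theorem mul_swap [DecidableEq α] (hσ : IsSuccessorRule σ) {v v' : Fin (m + 1) → α}
    (hvv' : Fin.tail v = Fin.tail v') : IsSuccessorRule (σ * swap v v') := by
  intro u
  rcases eq_or_ne u v with rfl | hv
  · simp [hσ v', hvv']
  rcases eq_or_ne u v' with rfl | hv'
  · simp [hσ v, hvv']
  · simp [swap_apply_of_ne_of_ne hv hv', hσ u]

theorem exists_tail_eq_apply_eq [Finite α] (hσ : IsSuccessorRule σ) (v : Fin (m + 1) → α)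
    (a : α) : ∃ v', Fin.tail v' = Fin.tail v ∧ σ v' = Fin.snoc (Fin.tail v) a := by
  have hlast : Injective fun b => σ (Fin.cons b (Fin.tail v)) (Fin.last m) := by
    intro b b' hbb'
    have h : σ (Fin.cons b (Fin.tail v)) = σ (Fin.cons b' (Fin.tail v)) := by
      rw [← Fin.snoc_init_self (σ _), ← Fin.snoc_init_self (σ (Fin.cons b' _)), hσ, hσ]
      simpa using hbb'
    simpa using σ.injective h
  obtain ⟨b, hb⟩ := Finite.injective_iff_surjective.mp hlast a
  refine ⟨Fin.cons b (Fin.tail v), Fin.tail_cons _ _, ?_⟩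
  rw [← Fin.snoc_init_self (σ _), hσ, Fin.tail_cons]
  exact congrArg _ hb

theorem forall_sameCycle [Finite α] (hσ : IsSuccessorRule σ)
    (hsib : ∀ v v' : Fin (m + 1) → α, Fin.tail v = Fin.tail v' → σ.SameCycle v v')
    (v u : Fin (m + 1) → α) : σ.SameCycle v u := by
  have step : ∀ v a, σ.SameCycle v (Fin.snoc (Fin.tail v) a) := by
    intro v a
    obtain ⟨v', hv', hσv'⟩ := hσ.exists_tail_eq_apply_eq v a
    rw [← hσv', Perm.sameCycle_apply_right]
    exact hsib _ _ hv'.symm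
  -- `u` is reached from `v` by appending its last `j` letters once it begins with the
  -- last `m + 1 - j` letters of `v`.
  have shift : ∀ j ≤ m + 1, ∀ v u : Fin (m + 1) → α,
      (∀ i i' : Fin (m + 1), (i' : ℕ) = i + j → u i = v i') → σ.SameCycle v u := by
    intro j
    induction j with
    | zero =>
      intro _ v u h
      rw [show u = v from funext fun i => h i i rfl]
    | succ j ih =>
      intro hj v u h
      refine (step v (u ⟨m - j, by omega⟩)).trans (ih (by omega) _ u fun i i' hi' => ?_)
      rcases Fin.eq_castSucc_or_eq_last i' with ⟨i', rfl⟩ | rfl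
      · rw [Fin.snoc_castSucc]
        exact h i i'.succ (by simp only [Fin.val_succ, Fin.val_castSucc] at hi' ⊢; omega)
      · rw [Fin.snoc_last]
        congr
        ext
        simp only [Fin.val_last] at hi' ⊢
        omega
  exact shift (m + 1) le_rfl v u fun i i' hi' => absurd i'.isLt (by omega)

theorem pow_apply_zero (hσ : IsSuccessorRule σ) (v : Fin (m + 1) → α) {t : ℕ} (ht : t < m + 1) :
    (σ ^ t) v 0 = v ⟨t, ht⟩ := by
  induction t generalizing v with
  | zero => rfl
  | succ t ih =>
    rw [pow_succ, Perm.mul_apply, ih (σ v) (by omega)]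
    exact congrFun (hσ v) ⟨t, by omega⟩

theorem take_drop_ofFn_pow_apply_zero (hσ : IsSuccessorRule σ) (v : Fin (m + 1) → α) {L i : ℕ}
    (hi : i + (m + 1) ≤ L) :
    ((List.ofFn fun t : Fin L => (σ ^ (t : ℕ)) v 0).drop i).take (m + 1) =
      List.ofFn ((σ ^ i) v) := by
  refine List.ext_getElem (by simp; omega) fun t ht _ => ?_
  simp only [List.getElem_take, List.getElem_drop, List.getElem_ofFn]
  rw [add_comm i t, pow_add, Perm.mul_apply, hσ.pow_apply_zero _ (by simp at ht; omega)]

end IsSuccessorRule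

theorem exists_isSuccessorRule_forall_sameCycle [Finite α] :
    ∃ σ : Perm (Fin (m + 1) → α), IsSuccessorRule σ ∧ ∀ v u, σ.SameCycle v u := by
  classical
  have := Fintype.ofFinite α
  let splitPairs (σ : Perm (Fin (m + 1) → α)) : Finset ((Fin (m + 1) → α) × (Fin (m + 1) → α)) :=
    Finset.univ.filter fun p => ¬ σ.SameCycle p.1 p.2
  obtain ⟨σ, hσ, hmin⟩ := (measure fun σ => (splitPairs σ).card).wf.has_min
    {σ | IsSuccessorRule σ} ⟨_, isSuccessorRule_rotate⟩
  refine ⟨σ, hσ, hσ.forall_sameCycle fun v v' hvv' => ?_⟩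
  by_contra hsplit
  refine hmin _ (hσ.mul_swap hvv') (Finset.card_lt_card ⟨fun p => ?_, fun hsub => ?_⟩)
  · simp only [splitPairs, Finset.mem_filter, Finset.mem_univ, true_and]
    exact mt (Perm.SameCycle.mul_swap_of_not_sameCycle hsplit)
  · have := hsub (show (v, v') ∈ splitPairs σ by simp [splitPairs, hsplit])
    simp only [splitPairs, Finset.mem_filter, Finset.mem_univ, true_and] at this
    exact this (Perm.sameCycle_mul_swap_of_not_sameCycle hsplit)

theorem exists_word [Fintype α] [Nonempty α] :
    ∃ w : List α, w.length = Fintype.card α ^ (m + 1) ∧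
      ∀ i j : ℕ, i + (m + 1) ≤ w.length → j + (m + 1) ≤ w.length →
        (w.drop i).take (m + 1) = (w.drop j).take (m + 1) → i = j := by
  obtain ⟨σ, hσ, hcycle⟩ := exists_isSuccessorRule_forall_sameCycle (α := α) (m := m)
  obtain ⟨v⟩ : Nonempty (Fin (m + 1) → α) := inferInstance
  refine ⟨List.ofFn fun t : Fin (Fintype.card α ^ (m + 1)) => (σ ^ (t : ℕ)) v 0, by simp, ?_⟩
  intro i j hi hj hij
  rw [List.length_ofFn] at hi hj
  rw [hσ.take_drop_ofFn_pow_apply_zero v hi, hσ.take_drop_ofFn_pow_apply_zero v hj,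
    List.ofFn_inj] at hij
  exact Perm.injOn_pow_apply_of_forall_sameCycle (hcycle v) (by simp; omega) (by simp; omega) hij

end DeBruijn

/-- Existence of (k,n)-de Bruijn words (non-circular, at-most-once form): for all positive
integers `k` and `n` there is a word of length `k ^ n` over an alphabet of size `k` in
which every word of length `n` appears at most once as a factor, i.e. any two occurrences
of the same length-`n` factor are at the same position. -/
theorem stmt_6 (k n : ℕ) (hk : 0 < k) (hn : 0 < n) :
    ∃ w : List (Fin k), w.length = k ^ n ∧
      ∀ i j : ℕ, i + n ≤ w.length → j + n ≤ w.length →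
        (w.drop i).take n = (w.drop j).take n → i = j := by
  obtain ⟨m, rfl⟩ : ∃ m, n = m + 1 := ⟨n - 1, by omega⟩
  have : Nonempty (Fin k) := ⟨⟨0, hk⟩⟩
  simpa using DeBruijn.exists_word (α := Fin k) (m := m)
end

section
/- Every graph G of maximum degree Δ that has a perfect matching admits a (2Δ−1)-matching coloring, i.e., a vertex coloring φ with 2Δ−1 colors and a perfect matching M such that for every edge (u,v), φ(u) = φ(v) if and only if (u,v) ∈ M. -/
noncomputable def pickCol {n : ℕ} [NeZero n] (s : Finset (Fin n)) : Fin n :=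
  if h : s.Nonempty then s.min' h else ⟨0, Nat.pos_of_ne_zero (NeZero.ne n)⟩

lemma pickCol_mem {n : ℕ} [NeZero n] {s : Finset (Fin n)} (h : s.Nonempty) :
    pickCol s ∈ s := by
  rw [pickCol, dif_pos h]; exact s.min'_mem h

noncomputable def greedyCol {V : Type} [Fintype V] [DecidableEq V] [Nonempty V]
    (G : SimpleGraph V) [DecidableRel G.Adj] (e : V ≃ Fin (Fintype.card V))
    (n : ℕ) [NeZero n] : ℕ → Fin n := fun i =>
  pickCol (Finset.univ \ (((Finset.range i).attach.filter
    (fun (j : {x // x ∈ Finset.range i}) =>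
    G.Adj (if h : i < Fintype.card V then e.symm ⟨i, h⟩ else Classical.arbitrary V)
      (if h : j.1 < Fintype.card V then e.symm ⟨j.1, h⟩
        else Classical.arbitrary V))).image
    (fun j => greedyCol G e n j.1)))
termination_by i => i
decreasing_by
  have := j.2
  simp only [Finset.mem_range] at this
  exact this

lemma exists_coloring {V : Type} [Fintype V] [DecidableEq V]
    (G : SimpleGraph V) [DecidableRel G.Adj] (n : ℕ) (hd : ∀ v, G.degree v < n) :
    ∃ c : V → Fin n, ∀ u v, G.Adj u v → c u ≠ c v := by
  classical
  cases isEmpty_or_nonempty V with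
  | inl h => exact ⟨fun v => isEmptyElim v, fun u v => isEmptyElim u⟩
  | inr h =>
    have hn : 0 < n := lt_of_le_of_lt (Nat.zero_le _) (hd (Classical.arbitrary V))
    haveI : NeZero n := ⟨hn.ne'⟩
    set e := Fintype.equivFin V with he
    set c : V → Fin n := fun v => greedyCol G e n (e v) with hc
    have key : ∀ v : V, ∀ u : V, G.Adj v u → (e u : ℕ) < (e v : ℕ) → c v ≠ c u := by
      intro v u hadj hlt
      have hv : ((e v : ℕ)) < Fintype.card V := (e v).2
      have hvert : (if h : ((e v : ℕ)) < Fintype.card V then e.symm ⟨(e v : ℕ), h⟩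
          else Classical.arbitrary V) = v := by
        rw [dif_pos hv]; simp
      show greedyCol G e n (e v) ≠ greedyCol G e n (e u)
      conv_lhs => rw [greedyCol]
      rw [hvert]
      set used : Finset (Fin n) := ((Finset.range ((e v : ℕ))).attach.filter
        (fun (j : {x // x ∈ Finset.range ((e v : ℕ))}) =>
        G.Adj v (if h : j.1 < Fintype.card V then e.symm ⟨j.1, h⟩
          else Classical.arbitrary V))).image
        (fun j => greedyCol G e n j.1) with hused
      have hcard : used.card < n := by
        have hinj : ((Finset.range ((e v : ℕ))).attach.filter
            (fun (j : {x // x ∈ Finset.range ((e v : ℕ))}) =>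
            G.Adj v (if h : j.1 < Fintype.card V then e.symm ⟨j.1, h⟩
              else Classical.arbitrary V))).card ≤ (G.neighborFinset v).card := by
          apply Finset.card_le_card_of_injOn (fun j =>
            if h : j.1 < Fintype.card V then e.symm ⟨j.1, h⟩
              else Classical.arbitrary V)
          · intro j hj
            rw [Finset.mem_coe, Finset.mem_filter] at hj
            exact (SimpleGraph.mem_neighborFinset _ _ _).2 hj.2
          · intro j1 h1 j2 h2 heq
            have hj1 : ((j1 : ℕ)) < Fintype.card V :=
              lt_of_lt_of_le (Finset.mem_range.1 j1.2) (le_of_lt hv)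
            have hj2 : ((j2 : ℕ)) < Fintype.card V :=
              lt_of_lt_of_le (Finset.mem_range.1 j2.2) (le_of_lt hv)
            simp only [dif_pos hj1, dif_pos hj2] at heq
            have := e.symm.injective heq
            exact Subtype.ext (by simpa using congrArg Fin.val this)
        calc used.card ≤ _ := Finset.card_image_le
          _ ≤ (G.neighborFinset v).card := hinj
          _ < n := hd v
      have hne : (Finset.univ \ used).Nonempty := by
        rw [Finset.sdiff_nonempty]
        intro hsub2
        have := Finset.card_le_card hsub2
        simp at this
        omega
      have hmem := pickCol_mem hne
      rw [Finset.mem_sdiff] at hmem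
      intro heq
      apply hmem.2
      rw [heq, hused]
      apply Finset.mem_image.2
      refine ⟨⟨(e u : ℕ), Finset.mem_range.2 hlt⟩, ?_, rfl⟩
      rw [Finset.mem_filter]
      refine ⟨Finset.mem_attach _ _, ?_⟩
      have hu : ((e u : ℕ)) < Fintype.card V := (e u).2
      rw [dif_pos hu]
      simpa using hadj
    refine ⟨c, fun u v hadj h => ?_⟩
    rcases lt_trichotomy ((e u : ℕ)) ((e v : ℕ)) with hlt | heq | hlt
    · exact key v u hadj.symm hlt h.symm
    · exact hadj.ne (e.injective (Fin.ext heq))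
    · exact key u v hadj hlt h
/-- Every graph `G` of maximum degree at most `Δ` that has a perfect matching admits a
`(2Δ - 1)`-matching coloring: a coloring `φ` of the vertices with `2Δ - 1` colors and a
perfect matching `M` such that for every edge `(u,v)` of `G`, `φ u = φ v` iff
`(u,v) ∈ M`. -/
theorem stmt_7 {V : Type} [Fintype V] [DecidableEq V]
    (G : SimpleGraph V) [DecidableRel G.Adj] (Δ : ℕ)
    (hΔ : ∀ v, G.degree v ≤ Δ)
    (hM : ∃ M : G.Subgraph, M.IsPerfectMatching) :
    ∃ (φ : V → Fin (2 * Δ - 1)) (M : G.Subgraph), M.IsPerfectMatching ∧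
      ∀ u v, G.Adj u v → (φ u = φ v ↔ M.Adj u v) := by
  classical
  obtain ⟨M, hMpm⟩ := hM
  cases isEmpty_or_nonempty V with
  | inl hE =>
    exact ⟨fun v => isEmptyElim v, M, hMpm, fun u v => isEmptyElim u⟩
  | inr hNE =>
    have hpm := (SimpleGraph.Subgraph.isPerfectMatching_iff).1 hMpm
    set f : V → V := fun v => (hpm v).choose with hfdef
    have hfadj : ∀ v, M.Adj v (f v) := fun v => (hpm v).choose_spec.1
    have huniq : ∀ v w, M.Adj v w → w = f v := fun v w hw =>
      ((hpm v).choose_spec.2 w hw).symm ▸ rfl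
    have hGadj : ∀ v, G.Adj v (f v) := fun v => M.adj_sub (hfadj v)
    have hfne : ∀ v, f v ≠ v := fun v hv => G.irrefl (hv ▸ hGadj v)
    have hff : ∀ v, f (f v) = v := fun v => (huniq (f v) v (hfadj v).symm).symm
    have hΔ1 : 1 ≤ Δ := by
      have := hΔ (Classical.arbitrary V)
      have hdeg : 0 < G.degree (Classical.arbitrary V) := by
        rw [G.degree_pos_iff_exists_adj]
        exact ⟨_, hGadj _⟩
      omega
    set e := Fintype.equivFin V with he
    set rep : V → V := fun v => if (e v : ℕ) ≤ (e (f v) : ℕ) then v else f v with hrepdef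
    have hrep_eq : ∀ v, rep v = if (e v : ℕ) ≤ (e (f v) : ℕ) then v else f v :=
      fun v => rfl
    have hrep_mem : ∀ v, rep v = v ∨ rep v = f v := by
      intro v; by_cases hc : (e v : ℕ) ≤ (e (f v) : ℕ)
      · left; rw [hrep_eq, if_pos hc]
      · right; rw [hrep_eq, if_neg hc]
    have hrep_f : ∀ v, rep (f v) = rep v := by
      intro v
      by_cases hc : (e v : ℕ) ≤ (e (f v) : ℕ)
      · have hne : (e v : ℕ) ≠ (e (f v) : ℕ) := fun hh =>
          hfne v (e.injective (Fin.ext hh.symm))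
        have h2 : ¬ ((e (f v) : ℕ) ≤ (e (f (f v)) : ℕ)) := by rw [hff]; omega
        rw [hrep_eq, if_neg h2, hff, hrep_eq, if_pos hc]
      · have h2 : (e (f v) : ℕ) ≤ (e (f (f v)) : ℕ) := by rw [hff]; omega
        rw [hrep_eq, if_pos h2, hrep_eq, if_neg hc]
    have hrep_rep : ∀ v, rep (rep v) = rep v := by
      intro v
      rcases hrep_mem v with hr | hr
      · rw [hr, hr]
      · rw [hr, hrep_f, ← hr]
    have hrep_pair : ∀ v, (rep v = v ∧ f (rep v) = f v) ∨ (rep v = f v ∧ f (rep v) = v) := by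
      intro v
      rcases hrep_mem v with hr | hr
      · exact Or.inl ⟨hr, by rw [hr]⟩
      · exact Or.inr ⟨hr, by rw [hr, hff]⟩
    -- the quotient-like graph
    set Q : SimpleGraph V := {
      Adj := fun a b => a ≠ b ∧ rep a = a ∧ rep b = b ∧
        (G.Adj a b ∨ G.Adj a (f b) ∨ G.Adj (f a) b ∨ G.Adj (f a) (f b)),
      symm := ⟨by
        intro a b ⟨h1, h2, h3, h4⟩
        refine ⟨h1.symm, h3, h2, ?_⟩
        rcases h4 with h | h | h | h
        · exact Or.inl h.symm
        · exact Or.inr (Or.inr (Or.inl h.symm))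
        · exact Or.inr (Or.inl h.symm)
        · exact Or.inr (Or.inr (Or.inr h.symm))⟩
      loopless := ⟨fun a ⟨h1, _⟩ => h1 rfl⟩ } with hQdef
    haveI : DecidableRel Q.Adj := fun a b => Classical.dec _
    have hQadj : ∀ a b, Q.Adj a b ↔ (a ≠ b ∧ rep a = a ∧ rep b = b ∧
        (G.Adj a b ∨ G.Adj a (f b) ∨ G.Adj (f a) b ∨ G.Adj (f a) (f b))) := by
      intro a b; rw [hQdef]
    -- degree bound for Q
    have hQdeg : ∀ a, Q.degree a < 2 * Δ - 1 := by
      intro a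
      have hle : (Q.neighborFinset a).card ≤
          ((G.neighborFinset a \ {f a}) ∪ (G.neighborFinset (f a) \ {a})).card := by
        apply Finset.card_le_card_of_injOn (fun b => if G.Adj a b ∨ G.Adj (f a) b then b else f b)
        · intro b hb
          rw [Finset.mem_coe, SimpleGraph.mem_neighborFinset, hQadj] at hb; rw [Finset.mem_coe]; beta_reduce
          obtain ⟨hab, hra, hrb, hD⟩ := hb
          have hbfa : b ≠ f a := by
            intro hbfa
            have : rep b = rep a := by rw [hbfa, hrep_f]
            rw [hrb, hra] at this
            exact hab this.symm
          by_cases hdir : G.Adj a b ∨ G.Adj (f a) b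
          · rw [if_pos hdir]
            rcases hdir with hd | hd
            · exact Finset.mem_union_left _ (Finset.mem_sdiff.2
                ⟨(SimpleGraph.mem_neighborFinset _ _ _).2 hd,
                 Finset.notMem_singleton.2 hbfa⟩)
            · exact Finset.mem_union_right _ (Finset.mem_sdiff.2
                ⟨(SimpleGraph.mem_neighborFinset _ _ _).2 hd,
                 Finset.notMem_singleton.2 hab.symm⟩)
          · rw [if_neg hdir]
            have hD' : G.Adj a (f b) ∨ G.Adj (f a) (f b) := by
              rcases hD with h | h | h | h
              · exact absurd (Or.inl h) hdir
              · exact Or.inl h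
              · exact absurd (Or.inr h) hdir
              · exact Or.inr h
            have hfbfa : f b ≠ f a := fun hh => hab (by
              have := congrArg f hh; rw [hff, hff] at this; exact this.symm)
            have hfba : f b ≠ a := fun hh => hbfa (by
              have := congrArg f hh; rw [hff] at this; exact this)
            rcases hD' with hd | hd
            · exact Finset.mem_union_left _ (Finset.mem_sdiff.2
                ⟨(SimpleGraph.mem_neighborFinset _ _ _).2 hd,
                 Finset.notMem_singleton.2 hfbfa⟩)
            · exact Finset.mem_union_right _ (Finset.mem_sdiff.2
                ⟨(SimpleGraph.mem_neighborFinset _ _ _).2 hd,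
                 Finset.notMem_singleton.2 hfba⟩)
        · intro b1 hb1 b2 hb2 heq0
          rw [Finset.mem_coe, SimpleGraph.mem_neighborFinset, hQadj] at hb1 hb2
          have heq : (if G.Adj a b1 ∨ G.Adj (f a) b1 then b1 else f b1) =
              (if G.Adj a b2 ∨ G.Adj (f a) b2 then b2 else f b2) := heq0
          by_cases h1 : G.Adj a b1 ∨ G.Adj (f a) b1 <;>
            by_cases h2 : G.Adj a b2 ∨ G.Adj (f a) b2
          · rwa [if_pos h1, if_pos h2] at heq
          · rw [if_pos h1, if_neg h2] at heq
            exfalso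
            have : rep b1 = rep b2 := by rw [heq, hrep_f]
            rw [hb1.2.2.1, hb2.2.2.1] at this
            rw [this] at heq
            exact hfne b2 heq.symm
          · rw [if_neg h1, if_pos h2] at heq
            exfalso
            have : rep b2 = rep b1 := by rw [← heq, hrep_f]
            rw [hb1.2.2.1, hb2.2.2.1] at this
            rw [this] at heq
            exact hfne b1 heq
          · rw [if_neg h1, if_neg h2] at heq
            have := congrArg f heq
            rwa [hff, hff] at this
      have hc1 : (G.neighborFinset a \ {f a}).card ≤ Δ - 1 := by
        have hmem : f a ∈ G.neighborFinset a :=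
          (SimpleGraph.mem_neighborFinset _ _ _).2 (hGadj a)
        have : (G.neighborFinset a \ {f a}).card = (G.neighborFinset a).card - 1 := by
          rw [Finset.card_sdiff_of_subset (Finset.singleton_subset_iff.2 hmem), Finset.card_singleton]
        rw [this]
        have := hΔ a
        rw [← SimpleGraph.card_neighborFinset_eq_degree] at this
        omega
      have hc2 : (G.neighborFinset (f a) \ {a}).card ≤ Δ - 1 := by
        have hmem : a ∈ G.neighborFinset (f a) :=
          (SimpleGraph.mem_neighborFinset _ _ _).2 (hGadj a).symm
        have : (G.neighborFinset (f a) \ {a}).card = (G.neighborFinset (f a)).card - 1 := by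
          rw [Finset.card_sdiff_of_subset (Finset.singleton_subset_iff.2 hmem), Finset.card_singleton]
        rw [this]
        have := hΔ (f a)
        rw [← SimpleGraph.card_neighborFinset_eq_degree] at this
        omega
      have := Finset.card_union_le (G.neighborFinset a \ {f a}) (G.neighborFinset (f a) \ {a})
      have hdeg : Q.degree a = (Q.neighborFinset a).card :=
        (SimpleGraph.card_neighborFinset_eq_degree _ _).symm
      omega
    obtain ⟨col, hcol⟩ := exists_coloring Q (2 * Δ - 1) hQdeg
    refine ⟨fun v => col (rep v), M, hMpm, ?_⟩
    intro u v hadj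
    constructor
    · -- φ u = φ v → M.Adj u v: contrapositive
      intro hφ
      by_contra hMadj
      -- show Q.Adj (rep u) (rep v)
      have hQ : Q.Adj (rep u) (rep v) := by
        rw [hQadj]
        refine ⟨?_, hrep_rep u, hrep_rep v, ?_⟩
        · intro hre
          have hne_uv : u ≠ v := hadj.ne
          have hne1 : v ≠ f u := fun hh => hMadj (hh ▸ hfadj u)
          have hne2 : u ≠ f v := fun hh => hMadj (hh ▸ (hfadj v).symm)
          rcases hrep_mem u with h1 | h1 <;> rcases hrep_mem v with h2 | h2 <;>
            rw [h1, h2] at hre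
          · exact hne_uv hre
          · exact hne2 hre
          · exact hne1 hre.symm
          · have := congrArg f hre; rw [hff, hff] at this; exact hne_uv this
        · rcases hrep_pair u with ⟨h1, h1'⟩ | ⟨h1, h1'⟩ <;>
            rcases hrep_pair v with ⟨h2, h2'⟩ | ⟨h2, h2'⟩
          · refine Or.inl ?_; rw [h1, h2]; exact hadj
          · refine Or.inr (Or.inl ?_); rw [h1, h2']; exact hadj
          · refine Or.inr (Or.inr (Or.inl ?_)); rw [h1', h2]; exact hadj
          · refine Or.inr (Or.inr (Or.inr ?_)); rw [h1', h2']; exact hadj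
      exact hcol _ _ hQ hφ
    · intro hMadj
      have hv : v = f u := huniq u v hMadj
      show col (rep u) = col (rep v)
      rw [hv, hrep_f]
end

section
/- Every graph of treewidth at most k that has a perfect matching admits a (k+1)-matching coloring. -/
open SimpleGraph

namespace TWP

variable {ι : Type} {T : SimpleGraph ι}

lemma path_length_eq_dist (ha : T.IsAcyclic) {a b : ι} (p : T.Walk a b) (hp : p.IsPath) :
    p.length = T.dist a b := by
  have hr : T.Reachable a b := ⟨p⟩
  obtain ⟨q, hq, hql⟩ := hr.exists_path_of_dist
  have h := ha.path_unique ⟨p, hp⟩ ⟨q, hq⟩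
  rw [Subtype.ext_iff] at h
  simp only at h
  rw [h, hql]

lemma dist_split (ha : T.IsAcyclic) {r x a : ι} (p : T.Walk r x) (hp : p.IsPath)
    (hx : a ∈ p.support) : T.dist r a + T.dist a x = T.dist r x := by
  classical
  rw [← path_length_eq_dist ha (p.takeUntil a hx) (hp.takeUntil hx),
      ← path_length_eq_dist ha (p.dropUntil a hx) (hp.dropUntil hx),
      ← path_length_eq_dist ha p hp]
  conv_rhs => rw [← Walk.take_spec p hx]
  rw [Walk.length_append]

lemma concat_isPath {r x y : ι} (p : T.Walk r x) (hp : p.IsPath) (h : T.Adj x y)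
    (hy : y ∉ p.support) : (p.concat h).IsPath := by
  rw [Walk.isPath_def, Walk.support_concat]
  simp [List.concat_eq_append, List.nodup_append, hp.support_nodup, hy]
  exact fun a ha h => hy (h ▸ ha)

lemma key_tree (hc : T.Connected) (ha : T.IsAcyclic) {S : Set ι} {r : ι} :
    ∀ {x t : ι} (w : T.Walk x t), w.IsPath → (∀ z ∈ w.support, z ∈ S) →
      (∀ i ∈ S, T.dist r t ≤ T.dist r i) →
      ∀ (p : T.Walk r x), p.IsPath → t ∈ p.support := by
  classical
  intro x t w
  induction w with
  | nil => intro _ _ _ p _; exact p.end_mem_support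
  | @cons x y t hxy w' ih =>
    intro hw hS hmin p hp
    have hxS : x ∈ S := hS x (by simp)
    by_cases hy : y ∈ p.support
    · exact p.support_takeUntil_subset hy
        (ih hw.of_cons (fun z hz => hS z (by simp [hz])) hmin (p.takeUntil y hy) (hp.takeUntil hy))
    · have hty : t ≠ y := by
        intro h; subst h
        obtain ⟨q, hq, _⟩ := (hc r t).exists_path_of_dist
        have hxq : x ∉ q.support := by
          intro hxq
          have hsplit := dist_split ha q hq hxq
          have hxt : 0 < T.dist x t := (hc x t).pos_dist_of_ne hxy.ne
          have := hmin x hxS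
          omega
        have hqp : (q.concat hxy.symm) = p :=
          congrArg Subtype.val
            (ha.path_unique ⟨q.concat hxy.symm, concat_isPath q hq hxy.symm hxq⟩ ⟨p, hp⟩)
        apply hy
        rw [← hqp, Walk.support_concat]
        simp [q.end_mem_support]
      have hmem := ih hw.of_cons (fun z hz => hS z (by simp [hz])) hmin (p.concat hxy)
        (concat_isPath p hp hxy hy)
      rw [Walk.support_concat, List.mem_append] at hmem
      rcases hmem with h | h
      · exact h
      · exact absurd (List.mem_singleton.mp h) hty

end TWP

namespace TWP

/-- Connectivity of a set of tree nodes, phrased via walks staying in the set. -/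
def Conn {ι : Type} (T : SimpleGraph ι) (A : Set ι) : Prop :=
  A.Nonempty ∧ ∀ a ∈ A, ∀ b ∈ A, ∃ w : T.Walk a b, w.IsPath ∧ ∀ z ∈ w.support, z ∈ A

lemma conn_of_induce_connected {ι : Type} {T : SimpleGraph ι} {A : Set ι}
    (h : (SimpleGraph.induce A T).Connected) : Conn T A := by
  haveI : DecidableEq ι := Classical.decEq ι
  constructor
  · obtain ⟨x⟩ := h.nonempty
    exact ⟨x.1, x.2⟩
  · intro a ha b hb
    obtain ⟨w⟩ := h.preconnected ⟨a, ha⟩ ⟨b, hb⟩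
    have : ∀ {x y : A} (w : (SimpleGraph.induce A T).Walk x y),
        ∃ w' : T.Walk x.1 y.1, ∀ z ∈ w'.support, z ∈ A := by
      intro x y w
      induction w with
      | nil => exact ⟨Walk.nil, by simpa using x.2⟩
      | @cons x y z hadj w' ih =>
        obtain ⟨w'', hw''⟩ := ih
        exact ⟨Walk.cons hadj w'', by
          intro z hz
          change z ∈ (x : ι) :: w''.support at hz
          rw [List.mem_cons] at hz
          rcases hz with rfl | hz
          · exact x.2
          · exact hw'' z hz⟩
    obtain ⟨w', hw'⟩ := this w
    exact ⟨w'.bypass, w'.bypass_isPath, fun z hz => hw' z (w'.support_bypass_subset hz)⟩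

lemma conn_union {ι : Type} {T : SimpleGraph ι} {A B : Set ι}
    (hA : Conn T A) (hB : Conn T B) (hAB : (A ∩ B).Nonempty) : Conn T (A ∪ B) := by
  haveI : DecidableEq ι := Classical.decEq ι
  obtain ⟨c, hcA, hcB⟩ := hAB
  have key : ∀ x ∈ A ∪ B, ∃ w : T.Walk x c, ∀ z ∈ w.support, z ∈ A ∪ B := by
    rintro x (hx | hx)
    · obtain ⟨w, _, hw⟩ := hA.2 x hx c hcA
      exact ⟨w, fun z hz => Or.inl (hw z hz)⟩
    · obtain ⟨w, _, hw⟩ := hB.2 x hx c hcB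
      exact ⟨w, fun z hz => Or.inr (hw z hz)⟩
  refine ⟨hA.1.mono Set.subset_union_left, fun a ha b hb => ?_⟩
  obtain ⟨w1, hw1⟩ := key a ha
  obtain ⟨w2, hw2⟩ := key b hb
  refine ⟨(w1.append w2.reverse).bypass, Walk.bypass_isPath _, fun z hz => ?_⟩
  have hz' := (w1.append w2.reverse).support_bypass_subset hz
  rw [Walk.mem_support_append_iff] at hz'
  rcases hz' with hz' | hz'
  · exact hw1 z hz'
  · exact hw2 z (by rwa [Walk.support_reverse, List.mem_reverse] at hz')

/-- There is a vertex of `S` all of whose neighbours in `S` lie in a common bag with it. -/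
lemma exists_low_degree {W : Type} (H : SimpleGraph W) {ι : Type} (T : SimpleGraph ι)
    (B : ι → Set W) (hc : T.Connected) (ha : T.IsAcyclic)
    (hcov : ∀ v, ∃ i, v ∈ B i)
    (hedge : ∀ u v, H.Adj u v → ∃ i, u ∈ B i ∧ v ∈ B i)
    (hsub : ∀ v, Conn T {i | v ∈ B i})
    {S : Set W} (hS : S.Finite) (hne : S.Nonempty) :
    ∃ v ∈ S, ∃ i, v ∈ B i ∧ ∀ u ∈ S, H.Adj u v → u ∈ B i := by
  classical
  haveI : DecidableEq ι := Classical.decEq ι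
  obtain ⟨r⟩ := hc.nonempty
  set m : W → ℕ := fun v => sInf (T.dist r '' {i | v ∈ B i}) with hm
  have hSv : ∀ v : W, (T.dist r '' {i | v ∈ B i}).Nonempty := by
    intro v
    obtain ⟨i, hi⟩ := hcov v
    exact ⟨T.dist r i, ⟨i, hi, rfl⟩⟩
  have hmint : ∀ v : W, ∃ t, v ∈ B t ∧ T.dist r t = m v ∧ ∀ i, v ∈ B i → T.dist r t ≤ T.dist r i := by
    intro v
    obtain ⟨t, ht, hdt⟩ := Nat.sInf_mem (hSv v)
    exact ⟨t, ht, hdt, fun i hi => by rw [hdt]; exact Nat.sInf_le ⟨i, hi, rfl⟩⟩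
  obtain ⟨v, hvS, hvmax⟩ := Set.exists_max_image S m hS hne
  obtain ⟨t, hvt, hdt, htmin⟩ := hmint v
  refine ⟨v, hvS, t, hvt, fun u huS hadj => ?_⟩
  obtain ⟨j, huj, hvj⟩ := hedge u v hadj
  obtain ⟨t', hut', hdt', ht'min⟩ := hmint u
  -- path from r to j
  obtain ⟨p, hp, _⟩ := (hc r j).exists_path_of_dist
  have htp : t ∈ p.support := by
    obtain ⟨w, hwp, hwS⟩ := (hsub v).2 j hvj t hvt
    exact key_tree hc ha w hwp hwS htmin p hp
  have ht'p : t' ∈ p.support := by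
    obtain ⟨w, hwp, hwS⟩ := (hsub u).2 j huj t' hut'
    exact key_tree hc ha w hwp hwS ht'min p hp
  -- split p at t'
  have hsplit := Walk.take_spec p ht'p
  have htmem : t ∈ (p.takeUntil t' ht'p).support ∨ t ∈ (p.dropUntil t' ht'p).support := by
    rw [← Walk.mem_support_append_iff, hsplit]; exact htp
  have hmu : m u ≤ m v := hvmax u huS
  rcases htmem with h | h
  · -- t on path from r to t' : dist r t + dist t t' = dist r t' ≤ dist r t, so t = t'
    have hds := dist_split ha (p.takeUntil t' ht'p) (hp.takeUntil ht'p) h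
    have : T.dist t t' = 0 := by
      have h1 : T.dist r t' = m u := hdt'
      have h2 : T.dist r t = m v := hdt
      omega
    have : t = t' := ((hc t t').dist_eq_zero_iff).mp this
    rwa [this]
  · -- t on path from t' to j, which lies in S_u
    obtain ⟨q, hq, hqS⟩ := (hsub u).2 t' hut' j huj
    have : p.dropUntil t' ht'p = q :=
      congrArg Subtype.val (ha.path_unique ⟨p.dropUntil t' ht'p, hp.dropUntil ht'p⟩ ⟨q, hq⟩)
    exact hqS t (this ▸ h)

end TWP

namespace TWP

lemma color_finite {W : Type} (H : SimpleGraph W) (k : ℕ) {ι : Type} (T : SimpleGraph ι)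
    (B : ι → Set W) (hc : T.Connected) (ha : T.IsAcyclic)
    (hcov : ∀ v, ∃ i, v ∈ B i)
    (hedge : ∀ u v, H.Adj u v → ∃ i, u ∈ B i ∧ v ∈ B i)
    (hsub : ∀ v, Conn T {i | v ∈ B i})
    (hsize : ∀ i, (B i).Finite ∧ (B i).ncard ≤ k + 1) :
    ∀ (n : ℕ) (S : Set W), S.Finite → S.ncard ≤ n →
      ∃ φ : W → Fin (k + 1), ∀ u ∈ S, ∀ v ∈ S, H.Adj u v → φ u ≠ φ v := by
  classical
  intro n
  induction n with
  | zero =>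
    intro S hS hcard
    have : S = ∅ := by
      rw [← Set.ncard_eq_zero hS]; omega
    exact ⟨fun _ => 0, by simp [this]⟩
  | succ n ih =>
    intro S hS hcard
    rcases S.eq_empty_or_nonempty with rfl | hne
    · exact ⟨fun _ => 0, by simp⟩
    obtain ⟨v, hvS, i, hvi, hnb⟩ := exists_low_degree H T B hc ha hcov hedge hsub hS hne
    set S' := S \ {v} with hS'
    have hS'f : S'.Finite := hS.diff
    have hS'card : S'.ncard ≤ n := by
      have := Set.ncard_diff_singleton_lt_of_mem hvS hS
      have h2 : S'.ncard = S.ncard - 1 := Set.ncard_diff_singleton_of_mem hvS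
      omega
    obtain ⟨φ, hφ⟩ := ih S' hS'f hS'card
    -- colors used by neighbours of v in S
    set N : Set W := {u | u ∈ S' ∧ H.Adj u v} with hN
    have hNsub : N ⊆ B i \ {v} := by
      rintro u ⟨huS', hadj⟩
      exact ⟨hnb u huS'.1 hadj, huS'.2⟩
    have hBif : (B i \ {v}).Finite := (hsize i).1.diff
    have hNcard : (φ '' N).ncard ≤ k := by
      calc (φ '' N).ncard ≤ N.ncard := Set.ncard_image_le (hBif.subset hNsub)
        _ ≤ (B i \ {v}).ncard := Set.ncard_le_ncard hNsub hBif
        _ ≤ k := by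
            have h1 : (B i \ {v}).ncard = (B i).ncard - 1 :=
              Set.ncard_diff_singleton_of_mem hvi
            have h2 := (hsize i).2
            have h3 : 0 < (B i).ncard := Set.ncard_pos ((hsize i).1) |>.mpr ⟨v, hvi⟩
            omega
    have hex : ∃ c : Fin (k + 1), c ∉ φ '' N := by
      by_contra h
      push_neg at h
      have : (Set.univ : Set (Fin (k + 1))) ⊆ φ '' N := fun c _ => h c
      have := Set.ncard_le_ncard this ((hBif.subset hNsub).image φ)
      rw [Set.ncard_univ, Nat.card_eq_fintype_card, Fintype.card_fin] at this
      omega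
    obtain ⟨c, hc'⟩ := hex
    refine ⟨Function.update φ v c, ?_⟩
    intro a haS b hbS hadj
    have hab : a ≠ b := hadj.ne
    by_cases hav : a = v
    · subst hav
      have hbN : b ∈ N := ⟨⟨hbS, hab.symm⟩, hadj.symm⟩
      rw [Function.update_self, Function.update_of_ne hab.symm]
      exact fun h => hc' ⟨b, hbN, h.symm⟩
    · by_cases hbv : b = v
      · subst hbv
        have haN : a ∈ N := ⟨⟨haS, hav⟩, hadj⟩
        rw [Function.update_self, Function.update_of_ne hav]
        exact fun h => hc' ⟨a, haN, h⟩
      · rw [Function.update_of_ne hav, Function.update_of_ne hbv]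
        exact hφ a ⟨haS, hav⟩ b ⟨hbS, hbv⟩ hadj

lemma colorable_of_decomp {W : Type} (H : SimpleGraph W) (k : ℕ) {ι : Type} (T : SimpleGraph ι)
    (B : ι → Set W) (hc : T.Connected) (ha : T.IsAcyclic)
    (hcov : ∀ v, ∃ i, v ∈ B i)
    (hedge : ∀ u v, H.Adj u v → ∃ i, u ∈ B i ∧ v ∈ B i)
    (hsub : ∀ v, Conn T {i | v ∈ B i})
    (hsize : ∀ i, (B i).Finite ∧ (B i).ncard ≤ k + 1) :
    ∃ ψ : W → Fin (k + 1), ∀ u v, H.Adj u v → ψ u ≠ ψ v := by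
  have hhom : ∀ G' : H.Subgraph, G'.verts.Finite → (G'.coe →g (⊤ : SimpleGraph (Fin (k + 1)))) := by
    intro G' hfin
    have hcol := color_finite H k T B hc ha hcov hedge hsub hsize
      G'.verts.ncard G'.verts hfin le_rfl
    obtain φ := hcol.choose
    have hφ := hcol.choose_spec
    exact ⟨fun x => hcol.choose x.1, by
      rintro ⟨a, haa⟩ ⟨b, hbb⟩ hab
      have hadj : G'.Adj a b := hab
      exact hφ a haa b hbb (hadj.adj_sub)⟩
  obtain ⟨f⟩ := SimpleGraph.nonempty_hom_of_forall_finite_subgraph_hom hhom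
  exact ⟨f, fun u v h => f.map_rel h⟩

end TWP




/-- `G` has treewidth at most `k`: there is a tree `T` (a connected acyclic graph) and a
family of bags `B i ⊆ V`, each of size at most `k + 1`, such that every vertex lies in
some bag, every edge has both endpoints in a common bag, and for each vertex `v` the set
of tree nodes whose bag contains `v` induces a connected subgraph of `T`. -/
def HasTreewidthAtMost {V : Type} (G : SimpleGraph V) (k : ℕ) : Prop :=
  ∃ (ι : Type) (T : SimpleGraph ι) (B : ι → Set V),
    T.Connected ∧ T.IsAcyclic ∧
    (∀ v, ∃ i, v ∈ B i) ∧
    (∀ u v, G.Adj u v → ∃ i, u ∈ B i ∧ v ∈ B i) ∧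
    (∀ v, (SimpleGraph.induce {i | v ∈ B i} T).Connected) ∧
    (∀ i, (B i).Finite ∧ (B i).ncard ≤ k + 1)

/-- Every graph of treewidth at most `k` that has a perfect matching admits a
`(k+1)`-matching coloring: a coloring `φ` of its vertices with `k + 1` colors and a
perfect matching `M` such that adjacent vertices have equal colors iff they are matched
in `M`. -/

theorem stmt_11 {V : Type} (G : SimpleGraph V) (k : ℕ)
    (htw : HasTreewidthAtMost G k)
    (hM : ∃ M : G.Subgraph, M.IsPerfectMatching) :
    ∃ (φ : V → Fin (k + 1)) (M : G.Subgraph), M.IsPerfectMatching ∧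
      ∀ u v, G.Adj u v → (φ u = φ v ↔ M.Adj u v) := by
  classical
  obtain ⟨M, hMpm⟩ := hM
  have hM1 : ∀ v, ∃! w, M.Adj v w := (SimpleGraph.Subgraph.isPerfectMatching_iff).mp hMpm
  set f : V → V := fun v => (hM1 v).choose with hf
  have hfv : ∀ v, M.Adj v (f v) := fun v => (hM1 v).choose_spec.1
  have huniq : ∀ v w, M.Adj v w → w = f v := fun v w h => (hM1 v).choose_spec.2 w h
  -- the equivalence relation of being matched
  let s : Setoid V := ⟨fun u v => u = v ∨ M.Adj u v, by
    constructor
    · exact fun x => Or.inl rfl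
    · rintro x y (rfl | h)
      · exact Or.inl rfl
      · exact Or.inr h.symm
    · rintro x y z (rfl | h) (rfl | h')
      · exact Or.inl rfl
      · exact Or.inr h'
      · exact Or.inr h
      · left
        rw [huniq y x h.symm, huniq y z h']⟩
  have hequiv : ∀ u v : V, Quotient.mk s u = Quotient.mk s v ↔ (u = v ∨ M.Adj u v) := by
    intro u v
    constructor
    · intro h; exact Quotient.exact h
    · intro h; exact Quotient.sound h
  -- the quotient graph
  let H : SimpleGraph (Quotient s) :=
    { Adj := fun x y => x ≠ y ∧ ∃ u v, Quotient.mk s u = x ∧ Quotient.mk s v = y ∧ G.Adj u v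
      symm := ⟨by
        rintro x y ⟨hne, u, v, hu, hv, h⟩
        exact ⟨hne.symm, v, u, hv, hu, h.symm⟩⟩
      loopless := ⟨by rintro x ⟨hne, -⟩; exact hne rfl⟩ }
  obtain ⟨ι, T, B, hc, ha, hcov, hedge, hsubI, hsize⟩ := htw
  set B' : ι → Set (Quotient s) := fun i => Quotient.mk s '' B i with hB'
  have hmemB' : ∀ (v : V) (i : ι), Quotient.mk s v ∈ B' i ↔ (v ∈ B i ∨ f v ∈ B i) := by
    intro v i
    constructor
    · rintro ⟨w, hw, hwv⟩
      rcases (hequiv w v).mp hwv with rfl | h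
      · exact Or.inl hw
      · rw [huniq v w h.symm] at hw
        exact Or.inr hw
    · rintro (h | h)
      · exact ⟨v, h, rfl⟩
      · exact ⟨f v, h, Quotient.sound (Or.inr (hfv v).symm)⟩
  obtain ⟨ψ, hψ⟩ := TWP.colorable_of_decomp H k T B' hc ha
    (by
      intro x
      induction x using Quotient.ind with
      | _ v =>
        obtain ⟨i, hi⟩ := hcov v
        exact ⟨i, v, hi, rfl⟩)
    (by
      rintro x y ⟨hne, u, v, rfl, rfl, hadj⟩
      obtain ⟨i, hu, hv⟩ := hedge u v hadj
      exact ⟨i, ⟨u, hu, rfl⟩, ⟨v, hv, rfl⟩⟩)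
    (by
      intro x
      induction x using Quotient.ind with
      | _ v =>
        have hset : {i | Quotient.mk s v ∈ B' i} = {i | v ∈ B i} ∪ {i | f v ∈ B i} := by
          ext i
          simpa using hmemB' v i
        rw [hset]
        have hvfv : G.Adj v (f v) := M.adj_sub (hfv v)
        obtain ⟨j, hj1, hj2⟩ := hedge v (f v) hvfv
        exact TWP.conn_union (TWP.conn_of_induce_connected (hsubI v))
          (TWP.conn_of_induce_connected (hsubI (f v))) ⟨j, hj1, hj2⟩)
    (fun i => ⟨(hsize i).1.image _, le_trans (Set.ncard_image_le (hsize i).1) (hsize i).2⟩)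
  refine ⟨fun v => ψ (Quotient.mk s v), M, hMpm, ?_⟩
  intro u v hadj
  by_cases hm : M.Adj u v
  · simp only [hm, iff_true]
    rw [Quotient.sound (Or.inr hm)]
  · simp only [hm, iff_false]
    apply hψ
    refine ⟨?_, u, v, rfl, rfl, hadj⟩
    intro h
    rcases (hequiv u v).mp h with rfl | h'
    · exact hadj.ne rfl
    · exact hm h'
end

section
/- Let Δ ≥ 2 and 1 ≤ j_1 < j_2 ≤ Δ. Let G_Δ be the graph formed by two disjoint copies B'_Δ and B''_Δ of the half graph B_Δ, modified by deleting the edges (u''_i, v''_{j_1}) for all i ∈ {j_1,...,j_2−1} and adding the edges (u''_i, v'_{j_2}) for all i ∈ {j_1,...,j_2−1}. Then G_Δ has no perfect matching. -/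
/-!
Hall's condition fails in `G_Δ`: the vertices `v''_{j₁}` and `v''_j` for `j ≥ j₂` have all their
neighbours among the `u''_i` with `i ≥ j₂`, which are one fewer, so a perfect matching cannot
match them injectively.
-/

/-- The graph `G_Δ`: two disjoint copies (indexed by a `Bool`; `false` = the copy `B'_Δ`,
`true` = the copy `B''_Δ`) of the half graph `B_Δ` (on `{u_1,…,u_Δ} ⊔ {v_1,…,v_Δ}` with
`u_i` adjacent to `v_j` iff `i ≥ j`), modified as follows: for every
`i ∈ {j₁, …, j₂ - 1}`, the edge `(u''_i, v''_{j₁})` is deleted and the edge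
`(u''_i, v'_{j₂})` is added. -/
def GDelta (Δ : ℕ) (j₁ j₂ : Fin Δ) : SimpleGraph (Bool × (Fin Δ ⊕ Fin Δ)) :=
  SimpleGraph.fromRel (fun x y =>
    (∃ (b : Bool) (i j : Fin Δ), x = (b, Sum.inl i) ∧ y = (b, Sum.inr j) ∧ j ≤ i ∧
      ¬(b = true ∧ j = j₁ ∧ j₁ ≤ i ∧ i < j₂))
    ∨ (∃ i : Fin Δ, x = (true, Sum.inl i) ∧ y = (false, Sum.inr j₂) ∧ j₁ ≤ i ∧ i < j₂))

namespace SimpleGraph.Subgraph.IsPerfectMatching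

variable {V : Type*} {G : SimpleGraph V} {M : G.Subgraph}

theorem card_le_of_forall_adj_mem (hM : M.IsPerfectMatching) {s t : Finset V}
    (hst : ∀ v ∈ s, ∀ w, G.Adj v w → w ∈ t) : s.card ≤ t.card := by
  choose partner hpartner using fun v => (M.isPerfectMatching_iff.mp hM v).exists
  have hinj : Function.Injective partner := fun v w hvw =>
    hM.1.eq_of_adj_right (hpartner v) (hvw ▸ hpartner w)
  exact Finset.card_le_card_of_injOn partner
    (fun v hv => hst v hv _ (M.adj_sub (hpartner v))) hinj.injOn

end SimpleGraph.Subgraph.IsPerfectMatching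

section

variable {Δ : ℕ} {j₁ j₂ : Fin Δ}

theorem GDelta_adj_inr_true {j : Fin Δ} {x : Bool × (Fin Δ ⊕ Fin Δ)}
    (hx : (GDelta Δ j₁ j₂).Adj (true, Sum.inr j) x) :
    ∃ i : Fin Δ, x = (true, Sum.inl i) ∧ j ≤ i ∧ (j = j₁ → j₂ ≤ i) := by
  rw [GDelta, SimpleGraph.fromRel_adj] at hx
  rcases hx.2 with (⟨b, i, j', h1, -⟩ | ⟨i, h1, -⟩) | (⟨b, i, j', hxi, h2, hji, hdel⟩ | ⟨i, -, h2, -⟩)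
  · simp at h1
  · simp at h1
  · obtain ⟨rfl, rfl⟩ : true = b ∧ j = j' := by simpa using h2
    exact ⟨i, hxi, hji, fun hj => not_lt.mp fun hi => hdel ⟨rfl, hj, hj ▸ hji, hi⟩⟩
  · simp at h2

end

theorem stmt_13_general (Δ : ℕ) (j₁ j₂ : Fin Δ) (h : j₁ < j₂) :
    ¬ ∃ M : (GDelta Δ j₁ j₂).Subgraph, M.IsPerfectMatching := by
  rintro ⟨M, hM⟩
  set T : Finset (Fin Δ) := Finset.univ.filter (j₂ ≤ ·)
  have hj₁T : j₁ ∉ T := by simpa [T] using h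
  have hcard := hM.card_le_of_forall_adj_mem
    (s := (insert j₁ T).map (.trans .inr (.sectR true _)))
    (t := T.map (.trans .inl (.sectR true _))) <| by
      simp only [Finset.mem_map, Finset.mem_insert]
      rintro _ ⟨j, hj, rfl⟩ x hx
      obtain ⟨i, rfl, hji, hj₁i⟩ := GDelta_adj_inr_true hx
      refine ⟨i, ?_, rfl⟩
      rcases hj with rfl | hj
      · simpa [T] using hj₁i rfl
      · simpa [T] using (Finset.mem_filter.mp hj).2.trans hji
  rw [Finset.card_map, Finset.card_map, Finset.card_insert_of_notMem hj₁T] at hcard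
  omega

/-- For `Δ ≥ 2` and `j₁ < j₂`, the graph `G_Δ` has no perfect matching. -/
theorem stmt_13 (Δ : ℕ) (hΔ : 2 ≤ Δ) (j₁ j₂ : Fin Δ) (h : j₁ < j₂) :
    ¬ ∃ M : (GDelta Δ j₁ j₂).Subgraph, M.IsPerfectMatching :=
  stmt_13_general Δ j₁ j₂ h
end

section
/- Let P_{t+1} be the path u_0, u_1, ..., u_t and let c be a labeling of its vertices by certificates. If there exist indices 1 ≤ i < j ≤ t−1 with (c(u_i), c(u_{i+1})) = (c(u_j), c(u_{j+1})), then there exists a cycle (of length 3, 4, or j−i) and a labeling of its vertices such that every vertex of the cycle has the same labeled closed-neighborhood multiset of certificates as some internal vertex u_ℓ (1 ≤ ℓ ≤ t−1) of the path. -/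
/-!
Extend the labels to a word `d` on `ℕ` and put `n = j - i`. The hypotheses say
`d (i + n) = d i` and `d (i + n + 1) = d (i + 1)`, so on the positions `i, …, j + 1` the word
agrees with the `n`-periodic repetition of the window `d i, …, d (j - 1)`. Label `ZMod n` by this
window: the residue `x` then sees `x - 1, x, x + 1` exactly as the internal vertex `u_ℓ` with
`ℓ ∈ (i, j]`, `ℓ ≡ i + x`, sees its neighbours on the path. Pulling this labeling back along
`Fin N → ZMod n` for a cycle length `N ≥ 3` divisible by `n` (namely `3`, `4` or `n`) gives the
cycle.
-/

open SimpleGraph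

theorem SimpleGraph.cycleGraph_neighborSet_eq_pair {m : ℕ} (v : Fin (m + 3)) :
    v - 1 ≠ v + 1 ∧ (cycleGraph (m + 3)).neighborSet v = {v - 1, v + 1} := by
  refine ⟨?_, cycleGraph_neighborSet⟩
  rw [ne_eq, sub_eq_iff_eq_add, add_assoc v, left_eq_add]
  exact ne_of_beq_false rfl

theorem Fin.natCast_val_add_of_dvd {N n : ℕ} (h : n ∣ N) (a b : Fin N) :
    (((a + b : Fin N) : ℕ) : ZMod n) = (a : ℕ) + (b : ℕ) := by
  rw [Fin.val_add, ← Nat.cast_add, ZMod.natCast_eq_natCast_iff' _ _ n, Nat.mod_mod_of_dvd _ h]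

theorem exists_cycle_length_multiple (n : ℕ) [NeZero n] :
    ∃ N, (N = 3 ∨ N = 4 ∨ N = n) ∧ 3 ≤ N ∧ n ∣ N := by
  rcases (show n = 1 ∨ n = 2 ∨ 3 ≤ n by have := NeZero.pos n; omega) with rfl | rfl | h
  · exact ⟨3, .inl rfl, le_rfl, one_dvd 3⟩
  · exact ⟨4, .inr (.inl rfl), by norm_num, by norm_num⟩
  · exact ⟨n, .inr (.inr rfl), h, dvd_rfl⟩

section PeriodicWindow

variable {C : Type*} (d : ℕ → C) {i n : ℕ} [NeZero n]

theorem apply_add_eq_apply_add_mod (h₀ : d (i + n) = d i) (h₁ : d (i + n + 1) = d (i + 1))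
    (r : ℕ) (hr : r ≤ n + 1) : d (i + r) = d (i + r % n) := by
  induction r using Nat.strong_induction_on with
  | _ r ih =>
    rcases lt_or_ge r n with hrn | hnr
    · rw [Nat.mod_eq_of_lt hrn]
    · obtain ⟨s, rfl⟩ := Nat.exists_eq_add_of_le hnr
      have hs : s ≤ 1 := by omega
      have hshift : d (i + (n + s)) = d (i + s) := by
        interval_cases s
        · exact h₀
        · exact h₁
      have hn := NeZero.pos n
      rw [hshift, Nat.add_mod_left]
      exact ih s (by omega) (by omega)

theorem exists_window_apply_eq (h₀ : d (i + n) = d i)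
    (h₁ : d (i + n + 1) = d (i + 1)) (x : ZMod n) :
    ∃ ℓ, i + 1 ≤ ℓ ∧ ℓ ≤ i + n ∧ d ℓ = d (i + x.val) ∧
      d (ℓ - 1) = d (i + (x - 1).val) ∧ d (ℓ + 1) = d (i + (x + 1).val) := by
  have hcast : ∀ r ≤ n + 1, d (i + r) = d (i + (r : ZMod n).val) := fun r hr => by
    rw [ZMod.val_natCast, apply_add_eq_apply_add_mod d h₀ h₁ r hr]
  have hlt := (x - 1).val_lt
  have hr : (((x - 1).val + 1 : ℕ) : ZMod n) = x := by
    rw [Nat.cast_succ, ZMod.natCast_zmod_val, sub_add_cancel]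
  refine ⟨i + ((x - 1).val + 1), by omega, by omega, ?_, ?_, ?_⟩
  · rw [hcast _ (by omega), hr]
  · rw [Nat.add_sub_assoc (by omega), Nat.add_sub_cancel, hcast _ (by omega),
      ZMod.natCast_zmod_val]
  · have hr' : (((x - 1).val + 2 : ℕ) : ZMod n) = x + 1 := by
      rw [Nat.cast_add, ZMod.natCast_zmod_val, Nat.cast_two]; ring
    rw [show i + ((x - 1).val + 1) + 1 = i + ((x - 1).val + 2) by omega, hcast _ (by omega), hr']

theorem exists_cycleGraph_labeling (h₀ : d (i + n) = d i) (h₁ : d (i + n + 1) = d (i + 1))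
    {N : ℕ} (hN : 3 ≤ N) (hnN : n ∣ N) :
    ∃ c' : Fin N → C, ∀ v, ∃ ℓ, i + 1 ≤ ℓ ∧ ℓ ≤ i + n ∧ c' v = d ℓ ∧
      ∃ w₁ w₂ : Fin N, w₁ ≠ w₂ ∧ (cycleGraph N).neighborSet v = {w₁, w₂} ∧
        ({c' w₁, c' w₂} : Multiset C) = {d (ℓ - 1), d (ℓ + 1)} := by
  obtain ⟨m, rfl⟩ := Nat.exists_eq_add_of_le' hN
  have hsucc (v : Fin (m + 3)) : (((v + 1 : Fin (m + 3)) : ℕ) : ZMod n) = (v : ℕ) + 1 := by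
    rw [Fin.natCast_val_add_of_dvd hnN, Fin.val_one, Nat.cast_one]
  have hpred (v : Fin (m + 3)) : (((v - 1 : Fin (m + 3)) : ℕ) : ZMod n) = (v : ℕ) - 1 := by
    rw [eq_sub_iff_add_eq, ← hsucc, sub_add_cancel]
  refine ⟨fun v => d (i + ((v : ℕ) : ZMod n).val), fun v => ?_⟩
  obtain ⟨ℓ, hℓ₁, hℓ₂, hℓ, hℓpred, hℓsucc⟩ := exists_window_apply_eq d h₀ h₁ ((v : ℕ) : ZMod n)
  obtain ⟨hne, hnbr⟩ := cycleGraph_neighborSet_eq_pair v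
  refine ⟨ℓ, hℓ₁, hℓ₂, hℓ.symm, v - 1, v + 1, hne, hnbr, ?_⟩
  simp only [hpred, hsucc, hℓpred, hℓsucc]

end PeriodicWindow

/-- Let `c` be a labeling of the vertices `u_0, …, u_t` of the path `P_{t+1}` by
certificates, and suppose there are indices `1 ≤ i < j ≤ t - 1` with
`(c u_i, c u_{i+1}) = (c u_j, c u_{j+1})`.  Then there is a cycle (of length `3`, `4`, or
`j - i`) and a labeling `c'` of its vertices such that every vertex `v` of the cycle has
the same labeled closed-neighborhood multiset of certificates as some internal vertex
`u_ℓ` (`1 ≤ ℓ ≤ t - 1`) of the path: `c' v = c u_ℓ`, and the multiset of labels of the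
two neighbors of `v` in the cycle equals `{c u_{ℓ-1}, c u_{ℓ+1}}`. -/
theorem stmt_17 (t : ℕ) (C : Type) (c : Fin (t + 1) → C)
    (i j : ℕ) (hij : i < j) (hj : j ≤ t - 1)
    (h1 : c ⟨i, by omega⟩ = c ⟨j, by omega⟩)
    (h2 : c ⟨i + 1, by omega⟩ = c ⟨j + 1, by omega⟩) :
    ∃ (n : ℕ) (c' : Fin n → C), (n = 3 ∨ n = 4 ∨ n = j - i) ∧ 3 ≤ n ∧
      ∀ v : Fin n, ∃ (ℓ : ℕ) (hℓ₁ : 1 ≤ ℓ) (hℓ₂ : ℓ ≤ t - 1),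
        c' v = c ⟨ℓ, by omega⟩ ∧
        ∃ w₁ w₂ : Fin n, w₁ ≠ w₂ ∧
          (SimpleGraph.cycleGraph n).neighborSet v = {w₁, w₂} ∧
          ({c' w₁, c' w₂} : Multiset C) =
            {c ⟨ℓ - 1, by omega⟩, c ⟨ℓ + 1, by omega⟩} := by
  set d : ℕ → C := fun k => c ⟨min k t, by omega⟩
  have hd (k : ℕ) (hk : k < t + 1) : c ⟨k, hk⟩ = d k := by
    simp only [d, min_eq_left (Nat.le_of_lt_succ hk)]
  have : NeZero (j - i) := ⟨by omega⟩
  have h₀ : d (i + (j - i)) = d i := by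
    rw [Nat.add_sub_cancel' hij.le, ← hd i (by omega), ← hd j (by omega), h1]
  have h₁ : d (i + (j - i) + 1) = d (i + 1) := by
    rw [Nat.add_sub_cancel' hij.le, ← hd (i + 1) (by omega), ← hd (j + 1) (by omega), h2]
  obtain ⟨N, hN, hN3, hdvd⟩ := exists_cycle_length_multiple (j - i)
  obtain ⟨c', hc'⟩ := exists_cycleGraph_labeling d h₀ h₁ hN3 hdvd
  refine ⟨N, c', hN, hN3, fun v => ?_⟩
  obtain ⟨ℓ, hℓ₁, hℓ₂, hv, w₁, w₂, hne, hnbr, hlabels⟩ := hc' v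
  exact ⟨ℓ, by omega, by omega, by rw [hv, hd], w₁, w₂, hne, hnbr, by rw [hlabels, hd, hd]⟩
end

section
/- Let G be a graph in which every vertex has a neighbor selected by a function f: V → V with f(v) adjacent to v, and suppose there is a word ω of length t in which every length-2 factor appears at most once, and a labeling π of vertices by letters of ω such that: for every vertex v either v is within distance 1 of a set S, or π(f(v))π(v) is a factor of ω at a unique position ℓ(v), and π(f(v))π(v)π(w) is a factor of ω for every neighbor w of v with appropriate phase. Then every vertex v with π(f(v))π(v) = ω_ℓ ω_{ℓ+1} satisfies d(v, S) ≤ ℓ + 1; in particular S is a dominating set at distance t. -/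
/-!
Follow the selected neighbours `v, f v, f (f v), …`. Away from `S` the phase drops by one
along each step, so `v` is a phase-successor of `f v` and the certificate of `f v`, read at
its position `m`, puts `π (f v) π v` at position `m + 1`. Since length-2 factors of `ω`
occur only once, `m + 1 = ℓ`: the position strictly decreases along the walk, which must
therefore reach the neighbourhood of `S` within `ℓ` steps.
-/

namespace DeBruijnDomination

variable {V : Type} {G : SimpleGraph V} {S : Set V}

def WithinDist (G : SimpleGraph V) (S : Set V) (v : V) (n : ℕ) : Prop :=
  ∃ s ∈ S, ∃ q : G.Walk v s, q.length ≤ n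

lemma WithinDist.mono {v : V} {m n : ℕ} (h : WithinDist G S v m) (hmn : m ≤ n) :
    WithinDist G S v n := by
  obtain ⟨s, hs, q, hq⟩ := h
  exact ⟨s, hs, q, hq.trans hmn⟩

lemma WithinDist.of_adj {u v : V} {n : ℕ} (huv : G.Adj v u) (h : WithinDist G S u n) :
    WithinDist G S v (n + 1) := by
  obtain ⟨s, hs, q, hq⟩ := h
  exact ⟨s, hs, .cons huv q, by simpa using hq⟩

lemma withinDist_one {v : V} (h : ∃ s ∈ S, v = s ∨ G.Adj v s) : WithinDist G S v 1 := by
  obtain ⟨s, hs, rfl | hadj⟩ := h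
  · exact ⟨v, hs, .nil, by simp⟩
  · exact ⟨s, hs, .cons hadj .nil, by simp⟩

variable {A : Type} {t : ℕ} {ω : ℕ → A} {π : V → A} {p : V → ZMod 3}

lemma position_succ_eq {u v : V} {ℓ m : ℕ}
    (huniq : ∀ ℓ m, 1 ≤ ℓ → ℓ + 1 ≤ t → 1 ≤ m → m + 1 ≤ t →
      ω ℓ = ω m → ω (ℓ + 1) = ω (m + 1) → ℓ = m)
    (huv : G.Adj u v) (hpv : p v = p u + 1)
    (hℓ : 1 ≤ ℓ) (hℓt : ℓ + 1 ≤ t) (hωℓ : ω ℓ = π u) (hωℓ₁ : ω (ℓ + 1) = π v)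
    (hωm₁ : ω (m + 1) = π u)
    (hcert : ∀ w, G.Adj u w → p w = p u + 1 → m + 2 ≤ t ∧ ω (m + 2) = π w) :
    m + 1 = ℓ := by
  obtain ⟨hm₂t, hωm₂⟩ := hcert v huv hpv
  exact huniq (m + 1) ℓ (by omega) (by omega) hℓ hℓt (hωm₁.trans hωℓ.symm)
    (hωm₂.trans hωℓ₁.symm)

lemma withinDist_of_factor {f : V → V} (hf : ∀ v, G.Adj v (f v))
    (huniq : ∀ ℓ m, 1 ≤ ℓ → ℓ + 1 ≤ t → 1 ≤ m → m + 1 ≤ t →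
      ω ℓ = ω m → ω (ℓ + 1) = ω (m + 1) → ℓ = m)
    (hphase : ∀ v, ¬(∃ s ∈ S, v = s ∨ G.Adj v s) → p (f v) = p v - 1)
    (hlocal : ∀ v, (∃ s ∈ S, v = s ∨ G.Adj v s) ∨
      (∃ ℓ, 1 ≤ ℓ ∧ ℓ + 1 ≤ t ∧ ω ℓ = π (f v) ∧ ω (ℓ + 1) = π v ∧
        ∀ w, G.Adj v w → p w = p v + 1 → ℓ + 2 ≤ t ∧ ω (ℓ + 2) = π w))
    (ℓ : ℕ) (v : V) (hℓ : 1 ≤ ℓ) (hℓt : ℓ + 1 ≤ t) (hωℓ : ω ℓ = π (f v))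
    (hωℓ₁ : ω (ℓ + 1) = π v) :
    WithinDist G S v (ℓ + 1) := by
  induction ℓ using Nat.strong_induction_on generalizing v with
  | _ ℓ ih =>
    by_cases hnear : ∃ s ∈ S, v = s ∨ G.Adj v s
    · exact (withinDist_one hnear).mono (by omega)
    have hpv : p v = p (f v) + 1 := by rw [hphase v hnear]; ring
    rcases hlocal (f v) with hnear' | ⟨m, hm, hmt, hωm, hωm₁, hcert⟩
    · exact ((withinDist_one hnear').of_adj (hf v)).mono (by omega)
    have hmℓ : m + 1 = ℓ :=
      position_succ_eq huniq (hf v).symm hpv hℓ hℓt hωℓ hωℓ₁ hωm₁ hcert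
    exact ((ih m (by omega) (f v) hm (by omega) hωm hωm₁).of_adj (hf v)).mono (by omega)

end DeBruijnDomination

/-- Soundness of the de Bruijn-word certification scheme for domination at distance `t`.

Let `G` be a graph in which every vertex `v` has a selected neighbor `f v`.  Let `ω` be a
word of length `t` (with letters `ω 1, …, ω t` in an alphabet `A`) in which every
length-2 factor appears at most once, let `π` label the vertices by letters, let
`p : V → ZMod 3` be a phase, and let `S` be a set of vertices, such that for every
vertex `v`:
* either `v` is within distance 1 of `S`,
* or `π (f v) π v` is a factor of `ω` at some position `ℓ` (necessarily unique), and for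
  every neighbor `w` of `v` with the appropriate phase (`p w = p v + 1`), the word
  `π (f v) (π v) (π w)` is a factor of `ω` (at the same position),

and the phase decreases along `f` away from `S`.  Then every vertex `v` with
`π (f v) π v = ω_ℓ ω_{ℓ+1}` is at distance at most `ℓ + 1` from `S`; in particular `S`
is a dominating set at distance `t`. -/
theorem stmt_19 {V : Type} (G : SimpleGraph V) (S : Set V) (f : V → V)
    (A : Type) (t : ℕ) (ht : 1 ≤ t) (ω : ℕ → A) (π : V → A) (p : V → ZMod 3)
    (hf : ∀ v, G.Adj v (f v))
    (huniq : ∀ ℓ m, 1 ≤ ℓ → ℓ + 1 ≤ t → 1 ≤ m → m + 1 ≤ t →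
      ω ℓ = ω m → ω (ℓ + 1) = ω (m + 1) → ℓ = m)
    (hphase : ∀ v, ¬(∃ s ∈ S, v = s ∨ G.Adj v s) → p (f v) = p v - 1)
    (hlocal : ∀ v, (∃ s ∈ S, v = s ∨ G.Adj v s) ∨
      (∃ ℓ, 1 ≤ ℓ ∧ ℓ + 1 ≤ t ∧ ω ℓ = π (f v) ∧ ω (ℓ + 1) = π v ∧
        ∀ w, G.Adj v w → p w = p v + 1 → ℓ + 2 ≤ t ∧ ω (ℓ + 2) = π w)) :
    (∀ v ℓ, 1 ≤ ℓ → ℓ + 1 ≤ t → ω ℓ = π (f v) → ω (ℓ + 1) = π v →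
      ∃ s ∈ S, ∃ q : G.Walk v s, q.length ≤ ℓ + 1) ∧
    (∀ v, ∃ s ∈ S, ∃ q : G.Walk v s, q.length ≤ t) := by
  have hfactor := DeBruijnDomination.withinDist_of_factor hf huniq hphase hlocal
  refine ⟨fun v ℓ hℓ hℓt hωℓ hωℓ₁ => hfactor ℓ v hℓ hℓt hωℓ hωℓ₁, fun v => ?_⟩
  rcases hlocal v with hnear | ⟨ℓ, hℓ, hℓt, hωℓ, hωℓ₁, -⟩
  · exact (DeBruijnDomination.withinDist_one hnear).mono ht
  · exact (hfactor ℓ v hℓ hℓt hωℓ hωℓ₁).mono hℓt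
end
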